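/- Let f : X → X be a continuous self-map of a compact metric space with the shadowing property. Suppose a sequence of eventually periodic δ_j-pseudo orbits ξ_j = (x_i^{(j)})_{i≥0} is given with δ_j → 0, and sup_{i≥0} d(x_i^{(j)}, x_i^{(j+1)}) ≤ ε_j where ∑_j ε_j ≤ ε. Then the limits x_i = lim_{j→∞} x_i^{(j)} exist, the sequence (x_i) is a genuine orbit of f (f(x_i) = x_{i+1}), d(x_0^{(0)}, x_0) ≤ ε, and ω(x_0, f) is a minimal set all of whose points are regularly recurrent; hence x_0 ∈ 𝔸(f). -/

import Mathlib

open Filter Topology Metric Set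

/-- A periodic structure: a sequence of positive integers with `m j ∣ m (j+1)` and `m j → ∞`. -/
structure PeriodicStructure where
  m : ℕ → ℕ
  pos : ∀ j, 0 < m j
  dvd : ∀ j, m j ∣ m (j + 1)
  tendsto : Filter.Tendsto m Filter.atTop Filter.atTop

/-- The odometer space `X_m` of a periodic structure. -/
def PeriodicStructure.space (p : PeriodicStructure) : Type :=
  {x : ℕ → ℕ // ∀ j, x j < p.m j ∧ x (j + 1) % p.m j = x j}

instance (p : PeriodicStructure) : TopologicalSpace p.space :=
  inferInstanceAs (TopologicalSpace
    {x : ℕ → ℕ // ∀ j, x j < p.m j ∧ x (j + 1) % p.m j = x j})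

/-- The odometer map `g_m` (adding 1 coordinatewise mod `m j`). -/
def PeriodicStructure.step (p : PeriodicStructure) (x : p.space) : p.space :=
  ⟨fun j => (x.1 j + 1) % p.m j, by
    intro j
    refine ⟨Nat.mod_lt _ (p.pos j), ?_⟩
    show (x.1 (j + 1) + 1) % p.m (j + 1) % p.m j = (x.1 j + 1) % p.m j
    rw [Nat.mod_mod_of_dvd _ (p.dvd j), ← (x.2 j).2, Nat.add_mod]
    exact Nat.add_mod_mod _ _ _⟩

/-- `S` is an odometer for `f`: `f` restricted to `S` is topologically conjugate to
an odometer `g_m : X_m → X_m`. -/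
def IsOdometer {X : Type*} [TopologicalSpace X] (f : X → X) (S : Set X) : Prop :=
  ∃ p : PeriodicStructure, ∃ h : p.space ≃ₜ S,
    ∀ z : p.space, f ((h z : X)) = ((h (p.step z) : X))

/-- `S` is a periodic orbit of `f`. -/
def IsPeriodicOrbit {X : Type*} (f : X → X) (S : Set X) : Prop :=
  ∃ x ∈ S, ∃ i : ℕ, 0 < i ∧ f^[i] x = x ∧ S = {y | ∃ j < i, f^[j] x = y}

/-- The ω-limit set of a sequence of points. -/
def omegaLimitSeq {X : Type*} [TopologicalSpace X] (x : ℕ → X) : Set X :=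
  {y | ∃ φ : ℕ → ℕ, StrictMono φ ∧
    Filter.Tendsto (fun j => x (φ j)) Filter.atTop (nhds y)}

/-- The ω-limit set `ω(x, f)` of a point. -/
def omegaLimitPt {X : Type*} [TopologicalSpace X] (f : X → X) (x : X) : Set X :=
  omegaLimitSeq fun i => f^[i] x

/-- `M` is a minimal set for `f`. -/
def IsMinimalSet {X : Type*} [TopologicalSpace X] (f : X → X) (M : Set X) : Prop :=
  M.Nonempty ∧ IsClosed M ∧ Set.MapsTo f M M ∧
    ∀ S ⊆ M, IsClosed S → Set.MapsTo f S S → S = ∅ ∨ S = M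

/-- `x` is a minimal point for `f`. -/
def IsMinimalPoint {X : Type*} [TopologicalSpace X] (f : X → X) (x : X) : Prop :=
  IsMinimalSet f (closure (Set.range fun i => f^[i] x))

/-- `x` is a regularly recurrent point for `f`. -/
def RegularlyRecurrent {X : Type*} [PseudoMetricSpace X] (f : X → X) (x : X) : Prop :=
  ∀ ε > 0, ∃ n : ℕ, 0 < n ∧ ∀ k : ℕ, dist x (f^[k * n] x) ≤ ε

/-- `f` has the shadowing property. -/
def ShadowingProperty {X : Type*} [PseudoMetricSpace X] (f : X → X) : Prop :=
  ∀ ε > 0, ∃ δ > 0, ∀ ξ : ℕ → X,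
    (∀ i, dist (f (ξ i)) (ξ (i + 1)) ≤ δ) → ∃ y, ∀ i, dist (f^[i] y) (ξ i) ≤ ε

/-!
The limit `a` of the pseudo orbits is an orbit, and `a` stays within `η_j = ∑_{l ≥ j} ε_l` of
the eventually periodic `ξ_j`. Hence the tail of the orbit of `a 0` is `2 η_j`-close to being
`N_j`-periodic, where `N_j = n_0 ⋯ n_j` is a common multiple of the periods of `ξ_0, …, ξ_j`.
Passing to the ω-limit set, every point of `ω(a 0)` returns `2 η_j`-close to itself at all
multiples of `N_j`, uniformly in the point: this gives minimality and regular recurrence, and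
makes the iterates of `f` equicontinuous on `ω(a 0)`. The closures of the `f^[N_j]`-orbits then
partition `ω(a 0)` into finitely many closed classes which `f` permutes cyclically and which refine
as `j` grows. Either the cycle lengths stay bounded, which forces a periodic orbit, or they tend
to infinity, and then recording the class of a point at every level conjugates `f` on `ω(a 0)`
to the odometer of the cycle lengths.
-/

section OrbitClosure

variable {X : Type*} [TopologicalSpace X] {f g : X → X} {x y : X}

def orbitClosure (g : X → X) (x : X) : Set X :=
  closure (range fun m => g^[m] x)

theorem iterate_mem_orbitClosure (g : X → X) (x : X) (m : ℕ) : g^[m] x ∈ orbitClosure g x :=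
  subset_closure ⟨m, rfl⟩

theorem self_mem_orbitClosure (g : X → X) (x : X) : x ∈ orbitClosure g x :=
  iterate_mem_orbitClosure g x 0

theorem isClosed_orbitClosure (g : X → X) (x : X) : IsClosed (orbitClosure g x) :=
  isClosed_closure

theorem orbitClosure_subset {T : Set X} (hT : IsClosed T) (hgT : MapsTo g T T) (hx : x ∈ T) :
    orbitClosure g x ⊆ T :=
  closure_minimal (range_subset_iff.2 fun m => hgT.iterate m hx) hT

theorem orbitClosure_iterate_subset (g : X → X) (x : X) (n : ℕ) :
    orbitClosure g^[n] x ⊆ orbitClosure g x :=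
  closure_mono <| range_subset_iff.2 fun m => ⟨n * m, by simp only [Function.iterate_mul]⟩

theorem orbitClosure_iterate_subset_of_dvd (g : X → X) (x : X) {n n' : ℕ} (h : n ∣ n') :
    orbitClosure g^[n'] x ⊆ orbitClosure g^[n] x := by
  obtain ⟨c, rfl⟩ := h
  rw [Function.iterate_mul]
  exact orbitClosure_iterate_subset _ x c

theorem mapsTo_orbitClosure (hg : Continuous g) (x : X) :
    MapsTo g (orbitClosure g x) (orbitClosure g x) := by
  refine fun y hy => map_mem_closure hg hy fun _ ⟨m, hm⟩ => ⟨m + 1, ?_⟩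
  simp only [← hm, Function.iterate_succ_apply']

theorem orbitClosure_subset_of_mem (hg : Continuous g) (hy : y ∈ orbitClosure g x) :
    orbitClosure g y ⊆ orbitClosure g x :=
  orbitClosure_subset (isClosed_orbitClosure g x) (mapsTo_orbitClosure hg x) hy

theorem image_orbitClosure [CompactSpace X] [T2Space X] (hf : Continuous f)
    (hfg : Function.Commute f g) (x : X) : f '' orbitClosure g x = orbitClosure g (f x) := by
  rw [orbitClosure, image_closure_of_isCompact isClosed_closure.isCompact hf.continuousOn,
    ← range_comp]
  congr 2
  ext m
  exact (hfg.iterate_right m).eq x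

end OrbitClosure

section MinimalSet

variable {X : Type*} [TopologicalSpace X] {f : X → X} {S : Set X}

theorem IsMinimalSet.orbitClosure_eq (hS : IsMinimalSet f S) (hf : Continuous f) {z : X}
    (hz : z ∈ S) : orbitClosure f z = S := by
  have hsub := orbitClosure_subset hS.2.1 hS.2.2.1 hz
  refine (hS.2.2.2 _ hsub (isClosed_orbitClosure f z) (mapsTo_orbitClosure hf z)).resolve_left ?_
  exact (nonempty_of_mem (self_mem_orbitClosure f z)).ne_empty

theorem isMinimalSet_of_subset_orbitClosure (hne : S.Nonempty) (hS : IsClosed S)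
    (hfS : MapsTo f S S) (hdense : ∀ z ∈ S, S ⊆ orbitClosure f z) : IsMinimalSet f S := by
  refine ⟨hne, hS, hfS, fun T hTS hT hfT => ?_⟩
  rcases T.eq_empty_or_nonempty with h | ⟨z, hz⟩
  · exact Or.inl h
  · exact Or.inr <| hTS.antisymm <| (hdense z (hTS hz)).trans (orbitClosure_subset hT hfT hz)

theorem IsMinimalSet.isPeriodicOrbit [T1Space X] (hS : IsMinimalSet f S) {z : X} (hz : z ∈ S)
    {q : ℕ} (hq : 0 < q) (hzq : Function.IsPeriodicPt f q z) : IsPeriodicOrbit f S := by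
  set O := {y | ∃ l < q, f^[l] z = y}
  have hO : MapsTo f O O := by
    rintro _ ⟨l, -, rfl⟩
    refine ⟨(l + 1) % q, Nat.mod_lt _ hq, ?_⟩
    rw [hzq.iterate_mod_apply, Function.iterate_succ_apply']
  have hOS : O ⊆ S := by
    rintro _ ⟨l, -, rfl⟩
    exact hS.2.2.1.iterate l hz
  have hOfin : O.Finite := (finite_lt_nat q).image fun l => f^[l] z
  refine ⟨z, hz, q, hq, hzq, ((hS.2.2.2 O hOS hOfin.isClosed hO).resolve_left ?_).symm⟩
  exact (nonempty_of_mem (show z ∈ O from ⟨0, hq, rfl⟩)).ne_empty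

end MinimalSet

section Metric

variable {X : Type*} [MetricSpace X] {f g : X → X}

theorem exists_forall_dist_iterate_lt [CompactSpace X] (hf : Continuous f) (n : ℕ) {ε : ℝ}
    (hε : 0 < ε) :
    ∃ δ > 0, ∀ u v, dist u v < δ → ∀ r < n, dist (f^[r] u) (f^[r] v) < ε := by
  have : UniformEquicontinuous fun r : Fin n => f^[r] := uniformEquicontinuous_finite.2
    fun r => CompactSpace.uniformContinuous_of_continuous (hf.iterate r)
  obtain ⟨δ, hδ, h⟩ := Metric.uniformEquicontinuous_iff.1 this ε hε
  exact ⟨δ, hδ, fun u v huv r hr => h u v huv ⟨r, hr⟩⟩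

/-- If `g^[m] z` is close to `y`, equicontinuity keeps `g^[m' - m] y` close to `g^[m'] z`,
which is close to `z` for suitable return times `m' ≥ m` of `z`. -/
theorem mem_orbitClosure_symm {T : Set X} (hT : IsClosed T) (hgT : MapsTo g T T)
    (hequi : ∀ γ > 0, ∃ δ > 0, ∀ u ∈ T, ∀ v ∈ T, dist u v < δ →
      ∀ t, dist (g^[t] u) (g^[t] v) ≤ γ)
    {z y : X} (hz : z ∈ T) (hrec : ∀ δ > 0, ∀ M, ∃ m ≥ M, dist (g^[m] z) z < δ)
    (hy : y ∈ orbitClosure g z) : z ∈ orbitClosure g y := by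
  refine Metric.mem_closure_iff.2 fun δ hδ => ?_
  obtain ⟨δ', hδ', hequi⟩ := hequi (δ / 2) (half_pos hδ)
  obtain ⟨_, ⟨m, rfl⟩, hym⟩ := Metric.mem_closure_iff.1 hy δ' hδ'
  obtain ⟨m', hmm', hm'⟩ := hrec (δ / 2) (half_pos hδ) m
  refine ⟨g^[m' - m] y, ⟨m' - m, rfl⟩, ?_⟩
  have hshift : g^[m' - m] (g^[m] z) = g^[m'] z := by
    rw [← Function.iterate_add_apply, Nat.sub_add_cancel hmm']
  have hclose : dist (g^[m' - m] y) (g^[m'] z) ≤ δ / 2 := hshift ▸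
    hequi y (orbitClosure_subset hT hgT hz hy) _ (hgT.iterate m hz) hym (m' - m)
  calc dist z (g^[m' - m] y) ≤ dist z (g^[m'] z) + dist (g^[m'] z) (g^[m' - m] y) :=
        dist_triangle _ _ _
    _ < δ / 2 + δ / 2 := by
        rw [dist_comm z, dist_comm _ (g^[m' - m] y)]; exact add_lt_add_of_lt_of_le hm' hclose
    _ = δ := add_halves δ

end Metric

section OmegaLimit

variable {X : Type*} [MetricSpace X] {f : X → X} {x y : X}

theorem mem_omegaLimitPt_iff_mapClusterPt :
    y ∈ omegaLimitPt f x ↔ MapClusterPt y atTop fun i => f^[i] x :=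
  ⟨fun ⟨_, hφ, h⟩ => h.mapClusterPt.of_comp hφ.tendsto_atTop, MapClusterPt.tendsto_subseq⟩

theorem mem_omegaLimitPt_iff :
    y ∈ omegaLimitPt f x ↔ ∀ ε > 0, ∃ᶠ i in atTop, dist (f^[i] x) y < ε := by
  rw [mem_omegaLimitPt_iff_mapClusterPt, nhds_basis_ball.mapClusterPt_iff_frequently]
  rfl

theorem isClosed_omegaLimitPt (f : X → X) (x : X) : IsClosed (omegaLimitPt f x) := by
  have : omegaLimitPt f x = {y | ClusterPt y (map (fun i => f^[i] x) atTop)} := by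
    ext y; exact mem_omegaLimitPt_iff_mapClusterPt
  rw [this]
  exact isClosed_setOfPred_clusterPt

theorem nonempty_omegaLimitPt [CompactSpace X] (f : X → X) (x : X) :
    (omegaLimitPt f x).Nonempty := by
  obtain ⟨y, -, φ, hφ, h⟩ := isCompact_univ.tendsto_subseq fun i => mem_univ (f^[i] x)
  exact ⟨y, φ, hφ, h⟩

theorem mapsTo_omegaLimitPt (hf : Continuous f) :
    MapsTo f (omegaLimitPt f x) (omegaLimitPt f x) := by
  intro y hy
  rw [mem_omegaLimitPt_iff_mapClusterPt] at hy ⊢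
  refine MapClusterPt.of_comp (tendsto_add_atTop_nat 1) ?_
  convert hy.continuousAt_comp hf.continuousAt using 1
  ext i
  exact Function.iterate_succ_apply' f i x

end OmegaLimit

section RegularRecurrence

variable {X : Type*} [MetricSpace X] {f : X → X} {N : ℕ → ℕ} {S : Set X} {x : X}

def UniformlyRegularlyRecurrentOn (f : X → X) (N : ℕ → ℕ) (S : Set X) : Prop :=
  ∀ ε > 0, ∀ᶠ j in atTop, ∀ z ∈ S, ∀ n, N j ∣ n → dist (f^[n] z) z ≤ ε

def AsymptoticallyRegular (f : X → X) (N : ℕ → ℕ) (x : X) : Prop :=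
  ∀ ε > 0, ∀ᶠ j in atTop, ∀ᶠ i in atTop, ∀ n, N j ∣ n → dist (f^[n] (f^[i] x)) (f^[i] x) ≤ ε

theorem UniformlyRegularlyRecurrentOn.regularlyRecurrent (h : UniformlyRegularlyRecurrentOn f N S)
    (hN : ∀ j, 0 < N j) {z : X} (hz : z ∈ S) : RegularlyRecurrent f z := by
  intro ε hε
  obtain ⟨j, hj⟩ := (h ε hε).exists
  exact ⟨N j, hN j, fun k => dist_comm z _ ▸ hj z hz _ (dvd_mul_left _ _)⟩

theorem UniformlyRegularlyRecurrentOn.orbitClosure_subset_closedBall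
    (h : UniformlyRegularlyRecurrentOn f N S) {ε : ℝ} (hε : 0 < ε) :
    ∀ᶠ j in atTop, ∀ y ∈ S, orbitClosure f^[N j] y ⊆ closedBall y ε := by
  filter_upwards [h ε hε] with j hj y hy
  refine closure_minimal (range_subset_iff.2 fun m => ?_) isClosed_closedBall
  rw [mem_closedBall, ← Function.iterate_mul]
  exact hj y hy _ (dvd_mul_right _ _)

theorem UniformlyRegularlyRecurrentOn.exists_forall_dist_iterate_le [CompactSpace X]
    (h : UniformlyRegularlyRecurrentOn f N S) (hf : Continuous f) (hfS : MapsTo f S S)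
    (hN : ∀ j, 0 < N j) {γ : ℝ} (hγ : 0 < γ) :
    ∃ δ > 0, ∀ u ∈ S, ∀ v ∈ S, dist u v < δ → ∀ t, dist (f^[t] u) (f^[t] v) ≤ γ := by
  obtain ⟨j, hj⟩ := (h (γ / 3) (by positivity)).exists
  obtain ⟨δ, hδ, hcont⟩ := exists_forall_dist_iterate_lt hf (N j) (show 0 < γ / 3 by positivity)
  refine ⟨δ, hδ, fun u hu v hv huv t => ?_⟩
  have hred : ∀ w ∈ S, dist (f^[t] w) (f^[t % N j] w) ≤ γ / 3 := fun w hw => by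
    have ht : f^[t] w = f^[N j * (t / N j)] (f^[t % N j] w) := by
      rw [← Function.iterate_add_apply, Nat.div_add_mod]
    rw [ht]
    exact hj _ (hfS.iterate _ hw) _ (dvd_mul_right _ _)
  calc dist (f^[t] u) (f^[t] v)
      ≤ dist (f^[t] u) (f^[t % N j] u) + dist (f^[t % N j] u) (f^[t % N j] v)
        + dist (f^[t % N j] v) (f^[t] v) := dist_triangle4 _ _ _ _
    _ ≤ γ / 3 + γ / 3 + γ / 3 := by
        gcongr
        · exact hred u hu
        · exact (hcont u v huv _ (Nat.mod_lt t (hN j))).le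
        · exact dist_comm (f^[t] v) _ ▸ hred v hv
    _ = γ := by ring

theorem UniformlyRegularlyRecurrentOn.exists_le_dist_iterate_lt
    (h : UniformlyRegularlyRecurrentOn f N S) (hN : ∀ j, 0 < N j) {z : X} (hz : z ∈ S) (j : ℕ)
    {δ : ℝ} (hδ : 0 < δ) (M : ℕ) : ∃ m ≥ M, dist ((f^[N j])^[m] z) z < δ := by
  obtain ⟨j', hj'⟩ := (h (δ / 2) (half_pos hδ)).exists
  refine ⟨M * N j', Nat.le_mul_of_pos_right M (hN j'), ?_⟩
  rw [← Function.iterate_mul]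
  exact (hj' z hz _ (dvd_mul_of_dvd_right (dvd_mul_left _ _) _)).trans_lt (half_lt_self hδ)

theorem UniformlyRegularlyRecurrentOn.orbitClosure_eq [CompactSpace X]
    (h : UniformlyRegularlyRecurrentOn f N S) (hf : Continuous f) (hSc : IsClosed S)
    (hfS : MapsTo f S S) (hN : ∀ j, 0 < N j) {j : ℕ} {y z : X} (hz : z ∈ S)
    (hy : y ∈ orbitClosure f^[N j] z) : orbitClosure f^[N j] y = orbitClosure f^[N j] z := by
  refine (orbitClosure_subset_of_mem (hf.iterate _) hy).antisymm
    (orbitClosure_subset_of_mem (hf.iterate _) ?_)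
  refine mem_orbitClosure_symm hSc (hfS.iterate _) (fun γ hγ => ?_) hz
    (fun δ hδ => h.exists_le_dist_iterate_lt hN hz j hδ) hy
  obtain ⟨δ, hδ, hequi⟩ := h.exists_forall_dist_iterate_le hf hfS hN hγ
  exact ⟨δ, hδ, fun u hu v hv huv t => by
    simpa only [← Function.iterate_mul] using hequi u hu v hv huv (N j * t)⟩

theorem AsymptoticallyRegular.uniformlyRegularlyRecurrentOn (h : AsymptoticallyRegular f N x)
    (hf : Continuous f) : UniformlyRegularlyRecurrentOn f N (omegaLimitPt f x) := by
  intro ε hε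
  filter_upwards [h ε hε] with j hj z hz n hn
  have hclosed : IsClosed {y | dist (f^[n] y) y ≤ ε} :=
    isClosed_le ((hf.iterate n).dist continuous_id) continuous_const
  exact hclosed.mem_of_mapClusterPt (mem_omegaLimitPt_iff_mapClusterPt.1 hz)
    (hj.mono fun i hi => hi n hn)

/-- The orbit of `x` passes close to `z` at some time `i'`, then later close to `w` at time `i`;
since the tail of the orbit is nearly `N j`-periodic, `f^[(i - i') % N j] z` is close to `w`. -/
theorem AsymptoticallyRegular.isMinimalSet_omegaLimitPt [CompactSpace X]
    (h : AsymptoticallyRegular f N x) (hf : Continuous f) (hN : ∀ j, 0 < N j) :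
    IsMinimalSet f (omegaLimitPt f x) := by
  refine isMinimalSet_of_subset_orbitClosure (nonempty_omegaLimitPt f x)
    (isClosed_omegaLimitPt f x) (mapsTo_omegaLimitPt hf) fun z hz w hw => ?_
  refine Metric.mem_closure_iff.2 fun ε hε => ?_
  obtain ⟨j, hj⟩ := (h (ε / 3) (by positivity)).exists
  obtain ⟨K, hK⟩ := eventually_atTop.1 hj
  obtain ⟨δ, hδ, hcont⟩ := exists_forall_dist_iterate_lt hf (N j) (show 0 < ε / 3 by positivity)
  obtain ⟨i', hi', hi'K⟩ :=
    ((mem_omegaLimitPt_iff.1 hz δ hδ).and_eventually (eventually_ge_atTop K)).exists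
  obtain ⟨i, hi, hii'⟩ := ((mem_omegaLimitPt_iff.1 hw (ε / 3) (by positivity)).and_eventually
    (eventually_ge_atTop i')).exists
  set r := (i - i') % N j
  have hi_eq : f^[i] x = f^[N j * ((i - i') / N j)] (f^[r + i'] x) := by
    rw [← Function.iterate_add_apply, ← add_assoc, Nat.div_add_mod, Nat.sub_add_cancel hii']
  have h₁ : dist (f^[i] x) (f^[r + i'] x) ≤ ε / 3 :=
    hi_eq ▸ hK (r + i') (hi'K.trans (Nat.le_add_left _ _)) _ (dvd_mul_right _ _)
  have h₂ : dist (f^[r + i'] x) (f^[r] z) < ε / 3 :=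
    Function.iterate_add_apply f r i' x ▸ hcont _ z hi' r (Nat.mod_lt _ (hN j))
  refine ⟨f^[r] z, ⟨r, rfl⟩, ?_⟩
  calc dist w (f^[r] z)
      ≤ dist w (f^[i] x) + dist (f^[i] x) (f^[r + i'] x) + dist (f^[r + i'] x) (f^[r] z) :=
        dist_triangle4 _ _ _ _
    _ < ε := by rw [dist_comm w] at *; linarith

end RegularRecurrence

theorem Function.iterate_eq_iterate_iff_modEq {α : Type*} {g : α → α} {a : α}
    (hp : 0 < minimalPeriod g a) {s t : ℕ} :
    g^[s] a = g^[t] a ↔ s ≡ t [MOD minimalPeriod g a] := by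
  rw [← iterate_mod_minimalPeriod_eq, ← iterate_mod_minimalPeriod_eq (n := t),
    iterate_eq_iterate_iff_of_lt_minimalPeriod (Nat.mod_lt _ hp) (Nat.mod_lt _ hp)]
  rfl

instance (p : PeriodicStructure) : T2Space p.space :=
  inferInstanceAs (T2Space {x : ℕ → ℕ // ∀ j, x j < p.m j ∧ x (j + 1) % p.m j = x j})

theorem isOdometer_of_continuous_bijective {X : Type*} [TopologicalSpace X] {f : X → X}
    {S : Set X} (hS : IsCompact S) (hfS : MapsTo f S S) (P : PeriodicStructure)
    (π : S → P.space) (hπ : Continuous π) (hbij : Function.Bijective π)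
    (hcomm : ∀ z, π (hfS.restrict f S S z) = P.step (π z)) : IsOdometer f S := by
  have := isCompact_iff_compactSpace.1 hS
  let h : S ≃ₜ P.space := hπ.homeoOfEquivCompactToT2 (f := Equiv.ofBijective π hbij)
  refine ⟨P, h.symm, fun w => ?_⟩
  have : π (hfS.restrict f S S (h.symm w)) = π (h.symm (P.step w)) := by
    rw [hcomm]
    exact congrArg P.step (h.apply_symm_apply w) |>.trans (h.apply_symm_apply _).symm
  exact congrArg Subtype.val (hbij.1 this)

section Cycles

variable {X : Type*}

/-- For `z₀ ∈ S`, the classes `orbitClosure f^[N j] y` (`y ∈ S`) partition `S` and are permuted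
cyclically by `f`: `cycleLength f N z₀ j` is the length of that cycle and `cyclePos f N z₀ j z`
the position of the class of `z` in it, counted from the class of `z₀`. -/
noncomputable def cycleLength [TopologicalSpace X] (f : X → X) (N : ℕ → ℕ) (z₀ : X) (j : ℕ) :
    ℕ :=
  Function.minimalPeriod (image f) (orbitClosure f^[N j] z₀)

noncomputable def cyclePos [TopologicalSpace X] (f : X → X) (N : ℕ → ℕ) (z₀ : X) (j : ℕ)
    (z : X) : ℕ :=
  sInf {t | z ∈ orbitClosure f^[N j] (f^[t] z₀)}

variable [MetricSpace X] {f : X → X} {N : ℕ → ℕ} {S : Set X} {z₀ : X}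

theorem exists_mem_orbitClosure_iterate (hS : IsMinimalSet f S) (hf : Continuous f)
    (hN : ∀ j, 0 < N j) (hz₀ : z₀ ∈ S) (j : ℕ) {z : X} (hz : z ∈ S) :
    ∃ t, z ∈ orbitClosure f^[N j] (f^[t] z₀) := by
  have hcover : orbitClosure f z₀ ⊆ ⋃ t ∈ Iio (N j), orbitClosure f^[N j] (f^[t] z₀) := by
    refine closure_minimal (range_subset_iff.2 fun i => mem_biUnion (Nat.mod_lt i (hN j)) ?_)
      ((finite_Iio _).isClosed_biUnion fun t _ => isClosed_orbitClosure _ _)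
    have hi : f^[i] z₀ = (f^[N j])^[i / N j] (f^[i % N j] z₀) := by
      rw [← Function.iterate_mul, ← Function.iterate_add_apply, Nat.div_add_mod]
    exact hi ▸ iterate_mem_orbitClosure _ _ _
  rw [← hS.orbitClosure_eq hf hz₀] at hz
  obtain ⟨t, -, ht⟩ := mem_iUnion₂.1 (hcover hz)
  exact ⟨t, ht⟩

theorem cyclePos_mem (hS : IsMinimalSet f S) (hf : Continuous f) (hN : ∀ j, 0 < N j)
    (hz₀ : z₀ ∈ S) (j : ℕ) {z : X} (hz : z ∈ S) :
    z ∈ orbitClosure f^[N j] (f^[cyclePos f N z₀ j z] z₀) :=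
  Nat.sInf_mem (exists_mem_orbitClosure_iterate hS hf hN hz₀ j hz)

theorem UniformlyRegularlyRecurrentOn.eq_of_forall_cyclePos_eq
    (h : UniformlyRegularlyRecurrentOn f N S) (hS : IsMinimalSet f S) (hf : Continuous f)
    (hN : ∀ j, 0 < N j) (hz₀ : z₀ ∈ S) {z w : X} (hz : z ∈ S) (hw : w ∈ S)
    (hzw : ∀ j, cyclePos f N z₀ j z = cyclePos f N z₀ j w) : z = w := by
  refine eq_of_forall_dist_le fun ε hε => ?_
  obtain ⟨j, hj⟩ := (h.orbitClosure_subset_closedBall (half_pos hε)).exists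
  have hy := hS.2.2.1.iterate (cyclePos f N z₀ j z) hz₀
  have hzy := mem_closedBall.1 (hj _ hy (cyclePos_mem hS hf hN hz₀ j hz))
  have hwy := mem_closedBall.1 (hj _ hy (hzw j ▸ cyclePos_mem hS hf hN hz₀ j hw))
  linarith [dist_triangle_right z w (f^[cyclePos f N z₀ j z] z₀)]

variable [CompactSpace X]

theorem orbitClosure_apply_iterate (hf : Continuous f) (n t : ℕ) (y : X) :
    orbitClosure f^[n] (f^[t] y) = (image f)^[t] (orbitClosure f^[n] y) := by
  have : Function.Semiconj (orbitClosure f^[n]) f (image f) := fun y =>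
    (image_orbitClosure hf (Function.Commute.self_iterate f n) y).symm
  exact (this.iterate_right t).eq y

namespace UniformlyRegularlyRecurrentOn

theorem cycleLength_pos (h : UniformlyRegularlyRecurrentOn f N S) (hf : Continuous f)
    (hSc : IsClosed S) (hfS : MapsTo f S S) (hN : ∀ j, 0 < N j) (hz₀ : z₀ ∈ S) (j : ℕ) :
    0 < cycleLength f N z₀ j := by
  refine Function.IsPeriodicPt.minimalPeriod_pos (hN j) ?_
  change (image f)^[N j] _ = _
  rw [← orbitClosure_apply_iterate hf]
  refine h.orbitClosure_eq hf hSc hfS hN hz₀ ?_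
  simpa using iterate_mem_orbitClosure f^[N j] z₀ 1

theorem orbitClosure_iterate_eq_iff (h : UniformlyRegularlyRecurrentOn f N S)
    (hf : Continuous f) (hSc : IsClosed S) (hfS : MapsTo f S S) (hN : ∀ j, 0 < N j)
    (hz₀ : z₀ ∈ S) (j s t : ℕ) :
    orbitClosure f^[N j] (f^[s] z₀) = orbitClosure f^[N j] (f^[t] z₀) ↔
      s ≡ t [MOD cycleLength f N z₀ j] := by
  rw [orbitClosure_apply_iterate hf, orbitClosure_apply_iterate hf]
  exact Function.iterate_eq_iterate_iff_modEq (h.cycleLength_pos hf hSc hfS hN hz₀ j)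

theorem mem_orbitClosure_iff_eq (h : UniformlyRegularlyRecurrentOn f N S) (hf : Continuous f)
    (hSc : IsClosed S) (hfS : MapsTo f S S) (hN : ∀ j, 0 < N j) {j : ℕ} {y z : X}
    (hy : y ∈ S) :
    z ∈ orbitClosure f^[N j] y ↔ orbitClosure f^[N j] z = orbitClosure f^[N j] y :=
  ⟨h.orbitClosure_eq hf hSc hfS hN hy, fun hzy => hzy ▸ self_mem_orbitClosure _ z⟩

theorem mem_orbitClosure_iterate_iff_modEq (h : UniformlyRegularlyRecurrentOn f N S)
    (hS : IsMinimalSet f S) (hf : Continuous f) (hN : ∀ j, 0 < N j) (hz₀ : z₀ ∈ S) {j t : ℕ}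
    {z : X} (hz : z ∈ S) :
    z ∈ orbitClosure f^[N j] (f^[t] z₀) ↔
      t ≡ cyclePos f N z₀ j z [MOD cycleLength f N z₀ j] := by
  rw [h.mem_orbitClosure_iff_eq hf hS.2.1 hS.2.2.1 hN (hS.2.2.1.iterate t hz₀),
    (h.mem_orbitClosure_iff_eq hf hS.2.1 hS.2.2.1 hN (hS.2.2.1.iterate _ hz₀)).1
      (cyclePos_mem hS hf hN hz₀ j hz),
    eq_comm, h.orbitClosure_iterate_eq_iff hf hS.2.1 hS.2.2.1 hN hz₀]

theorem cyclePos_lt (h : UniformlyRegularlyRecurrentOn f N S) (hS : IsMinimalSet f S)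
    (hf : Continuous f) (hN : ∀ j, 0 < N j) (hz₀ : z₀ ∈ S) (j : ℕ) {z : X} (hz : z ∈ S) :
    cyclePos f N z₀ j z < cycleLength f N z₀ j :=
  (Nat.sInf_le ((h.mem_orbitClosure_iterate_iff_modEq hS hf hN hz₀ hz).2
    (Nat.mod_modEq _ _))).trans_lt
    (Nat.mod_lt _ (h.cycleLength_pos hf hS.2.1 hS.2.2.1 hN hz₀ j))

theorem mod_cycleLength_eq_cyclePos (h : UniformlyRegularlyRecurrentOn f N S)
    (hS : IsMinimalSet f S) (hf : Continuous f) (hN : ∀ j, 0 < N j) (hz₀ : z₀ ∈ S) {j t : ℕ}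
    {z : X} (hz : z ∈ S) (hzt : z ∈ orbitClosure f^[N j] (f^[t] z₀)) :
    t % cycleLength f N z₀ j = cyclePos f N z₀ j z :=
  Eq.trans ((h.mem_orbitClosure_iterate_iff_modEq hS hf hN hz₀ hz).1 hzt)
    (Nat.mod_eq_of_lt (h.cyclePos_lt hS hf hN hz₀ j hz))

theorem cyclePos_succ_mod (h : UniformlyRegularlyRecurrentOn f N S) (hS : IsMinimalSet f S)
    (hf : Continuous f) (hN : ∀ j, 0 < N j) (hNdvd : ∀ j, N j ∣ N (j + 1)) (hz₀ : z₀ ∈ S)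
    (j : ℕ) {z : X} (hz : z ∈ S) :
    cyclePos f N z₀ (j + 1) z % cycleLength f N z₀ j = cyclePos f N z₀ j z :=
  h.mod_cycleLength_eq_cyclePos hS hf hN hz₀ hz
    (orbitClosure_iterate_subset_of_dvd f _ (hNdvd j) (cyclePos_mem hS hf hN hz₀ (j + 1) hz))

theorem cyclePos_apply (h : UniformlyRegularlyRecurrentOn f N S) (hS : IsMinimalSet f S)
    (hf : Continuous f) (hN : ∀ j, 0 < N j) (hz₀ : z₀ ∈ S) (j : ℕ) {z : X} (hz : z ∈ S) :
    cyclePos f N z₀ j (f z) = (cyclePos f N z₀ j z + 1) % cycleLength f N z₀ j := by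
  refine (h.mod_cycleLength_eq_cyclePos hS hf hN hz₀ (hS.2.2.1 hz) ?_).symm
  rw [Function.iterate_succ_apply', ← image_orbitClosure hf (Function.Commute.self_iterate f _)]
  exact mem_image_of_mem f (cyclePos_mem hS hf hN hz₀ j hz)

theorem cycleLength_dvd_succ (h : UniformlyRegularlyRecurrentOn f N S) (hS : IsMinimalSet f S)
    (hf : Continuous f) (hN : ∀ j, 0 < N j) (hNdvd : ∀ j, N j ∣ N (j + 1)) (hz₀ : z₀ ∈ S)
    (j : ℕ) : cycleLength f N z₀ j ∣ cycleLength f N z₀ (j + 1) := by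
  have hper : orbitClosure f^[N (j + 1)] (f^[cycleLength f N z₀ (j + 1)] z₀) =
      orbitClosure f^[N (j + 1)] z₀ := by
    rw [orbitClosure_apply_iterate hf]
    exact Function.iterate_minimalPeriod
  have hmem : f^[cycleLength f N z₀ (j + 1)] z₀ ∈ orbitClosure f^[N j] (f^[0] z₀) :=
    orbitClosure_iterate_subset_of_dvd f _ (hNdvd j) (hper ▸ self_mem_orbitClosure _ _)
  rw [h.mem_orbitClosure_iff_eq hf hS.2.1 hS.2.2.1 hN (hS.2.2.1.iterate 0 hz₀),
    h.orbitClosure_iterate_eq_iff hf hS.2.1 hS.2.2.1 hN hz₀] at hmem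
  exact Nat.modEq_zero_iff_dvd.1 hmem

theorem iterate_eq_self_of_forall_cycleLength_dvd (h : UniformlyRegularlyRecurrentOn f N S)
    (hf : Continuous f) (hSc : IsClosed S) (hfS : MapsTo f S S) (hN : ∀ j, 0 < N j)
    (hz₀ : z₀ ∈ S) {q : ℕ} (hq : ∀ j, cycleLength f N z₀ j ∣ q) : f^[q] z₀ = z₀ := by
  refine eq_of_forall_dist_le fun ε hε => ?_
  obtain ⟨j, hj⟩ := (h.orbitClosure_subset_closedBall hε).exists
  have hW : orbitClosure f^[N j] (f^[q] z₀) = orbitClosure f^[N j] (f^[0] z₀) :=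
    (h.orbitClosure_iterate_eq_iff hf hSc hfS hN hz₀ j q 0).2 (Nat.modEq_zero_iff_dvd.2 (hq j))
  exact hj z₀ hz₀ (hW ▸ self_mem_orbitClosure _ _)

theorem exists_cyclePos_eq (h : UniformlyRegularlyRecurrentOn f N S) (hS : IsMinimalSet f S)
    (hf : Continuous f) (hN : ∀ j, 0 < N j) (hNdvd : ∀ j, N j ∣ N (j + 1)) (hz₀ : z₀ ∈ S)
    (x : ℕ → ℕ) (hx : ∀ j, x j < cycleLength f N z₀ j ∧ x (j + 1) % cycleLength f N z₀ j = x j) :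
    ∃ z ∈ S, ∀ j, cyclePos f N z₀ j z = x j := by
  have hnested : ∀ j, orbitClosure f^[N (j + 1)] (f^[x (j + 1)] z₀) ⊆
      orbitClosure f^[N j] (f^[x j] z₀) := fun j => by
    rw [← (h.orbitClosure_iterate_eq_iff hf hS.2.1 hS.2.2.1 hN hz₀ j _ _).2
      ((hx j).2.trans (Nat.mod_eq_of_lt (hx j).1).symm)]
    exact orbitClosure_iterate_subset_of_dvd f _ (hNdvd j)
  obtain ⟨z, hz⟩ := IsCompact.nonempty_iInter_of_sequence_nonempty_isCompact_isClosed
    (fun j => orbitClosure f^[N j] (f^[x j] z₀)) hnested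
    (fun j => ⟨_, self_mem_orbitClosure _ _⟩) (isClosed_orbitClosure _ _).isCompact
    (fun j => isClosed_orbitClosure _ _)
  rw [mem_iInter] at hz
  have hzS : z ∈ S := orbitClosure_subset hS.2.1 (hS.2.2.1.iterate _)
    (hS.2.2.1.iterate _ hz₀) (hz 0)
  refine ⟨z, hzS, fun j => ?_⟩
  rw [← h.mod_cycleLength_eq_cyclePos hS hf hN hz₀ hzS (hz j), Nat.mod_eq_of_lt (hx j).1]

theorem continuousOn_cyclePos (h : UniformlyRegularlyRecurrentOn f N S) (hS : IsMinimalSet f S)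
    (hf : Continuous f) (hN : ∀ j, 0 < N j) (hz₀ : z₀ ∈ S) (j : ℕ) :
    ContinuousOn (cyclePos f N z₀ j) S := by
  intro z hz
  set B := ⋃ s ∈ Iio (cycleLength f N z₀ j) \ {cyclePos f N z₀ j z},
    orbitClosure f^[N j] (f^[s] z₀)
  have hB : IsClosed B :=
    (finite_Iio _).sdiff.isClosed_biUnion fun _ _ => isClosed_orbitClosure _ _
  have hzB : z ∉ B := by
    simp only [B, mem_iUnion₂, not_exists]
    intro s hs hzs
    refine hs.2 (mem_singleton_iff.2 ?_)
    rw [← h.mod_cycleLength_eq_cyclePos hS hf hN hz₀ hz hzs, Nat.mod_eq_of_lt hs.1]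
  refine tendsto_nhds_of_eventually_eq ?_
  filter_upwards [self_mem_nhdsWithin, mem_nhdsWithin_of_mem_nhds (hB.isOpen_compl.mem_nhds hzB)]
    with w hw hwB
  by_contra hne
  exact hwB (mem_biUnion ⟨h.cyclePos_lt hS hf hN hz₀ j hw, hne⟩ (cyclePos_mem hS hf hN hz₀ j hw))

end UniformlyRegularlyRecurrentOn

end Cycles

theorem UniformlyRegularlyRecurrentOn.isOdometer {X : Type*} [MetricSpace X] [CompactSpace X]
    {f : X → X} {N : ℕ → ℕ} {S : Set X} {z₀ : X} (h : UniformlyRegularlyRecurrentOn f N S)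
    (hS : IsMinimalSet f S) (hf : Continuous f) (hN : ∀ j, 0 < N j)
    (hNdvd : ∀ j, N j ∣ N (j + 1)) (hz₀ : z₀ ∈ S)
    (hp : Tendsto (cycleLength f N z₀) atTop atTop) : IsOdometer f S := by
  let P : PeriodicStructure := ⟨cycleLength f N z₀, h.cycleLength_pos hf hS.2.1 hS.2.2.1 hN hz₀,
    h.cycleLength_dvd_succ hS hf hN hNdvd hz₀, hp⟩
  let π : S → P.space := fun z => ⟨fun j => cyclePos f N z₀ j z, fun j =>
    ⟨h.cyclePos_lt hS hf hN hz₀ j z.2, h.cyclePos_succ_mod hS hf hN hNdvd hz₀ j z.2⟩⟩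
  refine isOdometer_of_continuous_bijective hS.2.1.isCompact hS.2.2.1 P π
    ((continuous_pi fun j => (h.continuousOn_cyclePos hS hf hN hz₀ j).domRestrict).subtype_mk _)
    ⟨fun z w hzw => Subtype.ext <| h.eq_of_forall_cyclePos_eq hS hf hN hz₀ z.2 w.2 fun j =>
      congrFun (congrArg Subtype.val hzw) j, fun x => ?_⟩
    fun z => Subtype.ext <| funext fun j => h.cyclePos_apply hS hf hN hz₀ j z.2
  obtain ⟨z, hz, hzx⟩ := h.exists_cyclePos_eq hS hf hN hNdvd hz₀ x.1 x.2
  exact ⟨⟨z, hz⟩, Subtype.ext (funext hzx)⟩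

theorem IsMinimalSet.isPeriodicOrbit_or_isOdometer {X : Type*} [MetricSpace X] [CompactSpace X]
    {f : X → X} {N : ℕ → ℕ} {S : Set X} (hS : IsMinimalSet f S) (hf : Continuous f)
    (hN : ∀ j, 0 < N j) (hNdvd : ∀ j, N j ∣ N (j + 1)) (h : UniformlyRegularlyRecurrentOn f N S) :
    IsPeriodicOrbit f S ∨ IsOdometer f S := by
  obtain ⟨z₀, hz₀⟩ := hS.1
  have hp_pos := h.cycleLength_pos hf hS.2.1 hS.2.2.1 hN hz₀
  by_cases hbdd : ∃ q > 0, ∀ j, cycleLength f N z₀ j ∣ q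
  · obtain ⟨q, hq, hpq⟩ := hbdd
    exact Or.inl <| hS.isPeriodicOrbit hz₀ hq <|
      h.iterate_eq_self_of_forall_cycleLength_dvd hf hS.2.1 hS.2.2.1 hN hz₀ hpq
  have hp_mono : Monotone (cycleLength f N z₀) := monotone_nat_of_le_succ fun j =>
    Nat.le_of_dvd (hp_pos _) (h.cycleLength_dvd_succ hS hf hN hNdvd hz₀ j)
  refine Or.inr <| h.isOdometer hS hf hN hNdvd hz₀ <|
    tendsto_atTop_atTop_of_monotone hp_mono fun B => ?_
  by_contra! hB
  exact hbdd ⟨B.factorial, B.factorial_pos, fun j => Nat.dvd_factorial (hp_pos j) (hB j).le⟩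

theorem apply_add_eq_of_dvd {α : Type*} {u : ℕ → α} {k n m i : ℕ}
    (h : ∀ i, k ≤ i → u i = u (i + n)) (hi : k ≤ i) (hm : n ∣ m) : u (i + m) = u i := by
  obtain ⟨c, rfl⟩ := hm
  have hper : Function.Periodic (fun l => u (k + l)) n := fun l => by
    simp only [← add_assoc, ← h _ (Nat.le_add_right k l)]
  have := (hper.nat_mul c) (i - k)
  simp only [← add_assoc, Nat.add_sub_cancel' hi] at this
  rwa [mul_comm]

theorem AsymptoticallyRegular.of_tendstoUniformly {X : Type*} [MetricSpace X] {f : X → X}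
    {x : X} {ξ : ℕ → ℕ → X} (hξ : TendstoUniformly ξ (fun i => f^[i] x) atTop) {k n N : ℕ → ℕ}
    (hper : ∀ j i, k j ≤ i → ξ j i = ξ j (i + n j)) (hnN : ∀ j, n j ∣ N j) :
    AsymptoticallyRegular f N x := by
  intro ε hε
  filter_upwards [Metric.tendstoUniformly_iff.1 hξ (ε / 2) (half_pos hε)] with j hj
  filter_upwards [eventually_ge_atTop (k j)] with i hi m hm
  have hξm : ξ j (i + m) = ξ j i := apply_add_eq_of_dvd (hper j) hi ((hnN j).trans hm)
  rw [← Function.iterate_add_apply, add_comm m i]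
  calc dist (f^[i + m] x) (f^[i] x) ≤ dist (f^[i + m] x) (ξ j (i + m)) + dist (ξ j i) (f^[i] x) :=
        hξm ▸ dist_triangle _ _ _
    _ ≤ ε := by linarith [hj (i + m), dist_comm (ξ j i) (f^[i] x) ▸ hj i]

theorem exists_tendstoUniformly_of_dist_le_of_summable {ι X : Type*} [MetricSpace X]
    [CompleteSpace X] {F : ℕ → ι → X} {εs : ℕ → ℝ} (hsum : Summable εs)
    (hF : ∀ j i, dist (F j i) (F (j + 1) i) ≤ εs j) :
    ∃ a : ι → X, (∀ i, Tendsto (fun j => F j i) atTop (𝓝 (a i))) ∧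
      TendstoUniformly F a atTop ∧ ∀ i, dist (F 0 i) (a i) ≤ ∑' j, εs j := by
  choose a ha using fun i =>
    cauchySeq_tendsto_of_complete (cauchySeq_of_dist_le_of_summable εs (fun j => hF j i) hsum)
  have hdist : ∀ j i, dist (F j i) (a i) ≤ ∑' l, εs (j + l) := fun j i =>
    dist_le_tsum_of_dist_le_of_tendsto εs (fun j => hF j i) hsum (ha i) j
  have htail : Tendsto (fun j => ∑' l, εs (j + l)) atTop (𝓝 0) := by
    simpa only [add_comm] using tendsto_sum_nat_add εs
  refine ⟨a, ha, Metric.tendstoUniformly_iff.2 fun r hr => ?_, fun i => ?_⟩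
  · filter_upwards [htail.eventually (gt_mem_nhds hr)] with j hj i
    exact (dist_comm (a i) _ ▸ hdist j i).trans_lt hj
  · simpa only [zero_add] using hdist 0 i

theorem Continuous.map_eq_of_tendsto_of_dist_le {X Y : Type*} [MetricSpace X] [MetricSpace Y]
    {f : X → Y} (hf : Continuous f) {u : ℕ → X} {v : ℕ → Y} {a : X} {b : Y} {δ : ℕ → ℝ}
    (hu : Tendsto u atTop (𝓝 a)) (hv : Tendsto v atTop (𝓝 b)) (hδ : Tendsto δ atTop (𝓝 0))
    (h : ∀ j, dist (f (u j)) (v j) ≤ δ j) : f a = b :=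
  tendsto_nhds_unique (tendsto_of_tendsto_of_dist ((hf.tendsto a).comp hu)
    (squeeze_zero (fun _ => dist_nonneg) h hδ)) hv

theorem limit_of_pseudo_orbits_in_A_general {X : Type*} [MetricSpace X] [CompactSpace X]
    (f : X → X) (hf : Continuous f)
    (ε : ℝ) (εs δs : ℕ → ℝ)
    (hsum : Summable εs) (hsum' : ∑' j, εs j ≤ ε)
    (hδ0 : Filter.Tendsto δs Filter.atTop (nhds 0))
    (ξ : ℕ → ℕ → X)
    (hpo : ∀ j i, dist (f (ξ j i)) (ξ j (i + 1)) ≤ δs j)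
    (hep : ∀ j, ∃ k : ℕ, ∃ n : ℕ, 0 < n ∧ ∀ i, k ≤ i → ξ j i = ξ j (i + n))
    (hcl : ∀ j i, dist (ξ j i) (ξ (j + 1) i) ≤ εs j) :
    ∃ a : ℕ → X,
      (∀ i, Filter.Tendsto (fun j => ξ j i) Filter.atTop (nhds (a i))) ∧
      (∀ i, f (a i) = a (i + 1)) ∧
      dist (ξ 0 0) (a 0) ≤ ε ∧
      IsMinimalSet f (omegaLimitPt f (a 0)) ∧
      (∀ z ∈ omegaLimitPt f (a 0), RegularlyRecurrent f z) ∧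
      (IsPeriodicOrbit f (omegaLimitPt f (a 0)) ∨
        IsOdometer f (omegaLimitPt f (a 0))) := by
  obtain ⟨a, ha, hunif, hdist⟩ := exists_tendstoUniformly_of_dist_le_of_summable hsum hcl
  have horbit : ∀ i, f (a i) = a (i + 1) := fun i =>
    hf.map_eq_of_tendsto_of_dist_le (ha i) (ha (i + 1)) hδ0 fun j => hpo j i
  have ha_iter : (fun i => f^[i] (a 0)) = a := funext fun i => by
    induction i with
    | zero => rfl
    | succ i ih => rw [Function.iterate_succ_apply', ih, horbit]
  choose k n hn hper using hep
  set N := fun j => ∏ l ∈ Finset.range (j + 1), n l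
  have hN : ∀ j, 0 < N j := fun j => Finset.prod_pos fun l _ => hn l
  have hNdvd : ∀ j, N j ∣ N (j + 1) := fun j => by
    simp only [N, Finset.prod_range_succ n (j + 1), dvd_mul_right]
  have hreg : AsymptoticallyRegular f N (a 0) := .of_tendstoUniformly (ha_iter ▸ hunif) hper
    fun j => Finset.dvd_prod_of_mem n (Finset.self_mem_range_succ j)
  have hmin := hreg.isMinimalSet_omegaLimitPt hf hN
  have hrec := hreg.uniformlyRegularlyRecurrentOn hf
  exact ⟨a, ha, horbit, (hdist 0).trans hsum', hmin, fun z hz => hrec.regularlyRecurrent hN hz,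
    hmin.isPeriodicOrbit_or_isOdometer hf hN hNdvd hrec⟩

theorem limit_of_pseudo_orbits_in_A {X : Type*} [MetricSpace X] [CompactSpace X]
    (f : X → X) (hf : Continuous f) (hsh : ShadowingProperty f)
    (ε : ℝ) (hε : 0 < ε) (εs δs : ℕ → ℝ)
    (hεs : ∀ j, 0 < εs j) (hδs : ∀ j, 0 < δs j)
    (hsum : Summable εs) (hsum' : ∑' j, εs j ≤ ε)
    (hδ0 : Filter.Tendsto δs Filter.atTop (nhds 0))
    (ξ : ℕ → ℕ → X)
    (hpo : ∀ j i, dist (f (ξ j i)) (ξ j (i + 1)) ≤ δs j)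
    (hep : ∀ j, ∃ k : ℕ, ∃ n : ℕ, 0 < n ∧ ∀ i, k ≤ i → ξ j i = ξ j (i + n))
    (hcl : ∀ j i, dist (ξ j i) (ξ (j + 1) i) ≤ εs j) :
    ∃ a : ℕ → X,
      (∀ i, Filter.Tendsto (fun j => ξ j i) Filter.atTop (nhds (a i))) ∧
      (∀ i, f (a i) = a (i + 1)) ∧
      dist (ξ 0 0) (a 0) ≤ ε ∧
      IsMinimalSet f (omegaLimitPt f (a 0)) ∧
      (∀ z ∈ omegaLimitPt f (a 0), RegularlyRecurrent f z) ∧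
      (IsPeriodicOrbit f (omegaLimitPt f (a 0)) ∨
        IsOdometer f (omegaLimitPt f (a 0))) :=
  limit_of_pseudo_orbits_in_A_general f hf ε εs δs hsum hsum' hδ0 ξ hpo hep hcl
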